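/- Let X₁, …, Xₙ have a C² cdf F on ℝ₊ⁿ with everywhere positive density, and suppose F is MTP₂. Then for any nonempty proper subset I of {1,…,n} and any points xᵢ ≤ bᵢ, with Aᵢ = {Xᵢ ≤ xᵢ} and Bᵢ = {Xᵢ ≤ bᵢ}, one has P(∩ᵢ₌₁ⁿ Aᵢ)/(P(∩_{i∈I} Aᵢ) P(∩_{i∉I} Aᵢ)) ≥ P(∩ᵢ₌₁ⁿ Bᵢ)/(P(∩_{i∈I} Bᵢ) P(∩_{i∉I} Bᵢ)). -/

import Mathlib

open MeasureTheory Filter Topology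

/-!
Write `F_J` for the joint cdf of the coordinates in `J` and `F = F_univ`. Applying MTP₂ to `y`
and the point that equals `z` on `J` and `t` off `J`, then letting `t → ∞`, gives
`F(y) F_J(z) ≤ F_J(y) F(w)` for `z ≤ y`, where `w` equals `z` on `J` and `y` off `J`.
Used with `J = Iᶜ`, `(y, z) = (b, x)`, and then with `J = I`, `z = x` and `y` equal to `b` on `I`
and `x` off `I`, this chains to `F(b) F_I(x) F_{Iᶜ}(x) ≤ F(x) F_I(b) F_{Iᶜ}(b)`.
The positive density makes `F(x) > 0`, hence all the denominators are positive.
-/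

theorem setIntegral_pos_of_forall_pos {X : Type*} [MeasurableSpace X] {μ : Measure X}
    {s : Set X} {f : X → ℝ} (hs : MeasurableSet s) (hμs : μ s ≠ 0) (hf : ∀ x ∈ s, 0 < f x)
    (hint : IntegrableOn f s μ) : 0 < ∫ x in s, f x ∂μ := by
  rw [setIntegral_pos_iff_support_of_nonneg_ae
    (ae_restrict_of_forall_mem hs fun x hx => (hf x hx).le) hint]
  exact (pos_iff_ne_zero.2 hμs).trans_le (measure_mono fun x hx => ⟨(hf x hx).ne', hx⟩)

section

variable {ι : Type*}

noncomputable def marginalCdf (μ : Measure (ι → ℝ)) (J : Finset ι) (y : ι → ℝ) : ℝ :=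
  μ.real {v | ∀ i ∈ J, v i ≤ y i}

def IsMTP2 (F : (ι → ℝ) → ℝ) : Prop :=
  ∀ x y, F x * F y ≤ F (x ⊔ y) * F (x ⊓ y)

variable {μ : Measure (ι → ℝ)}

theorem marginalCdf_mono [IsFiniteMeasure μ] (J : Finset ι) {y z : ι → ℝ} (hyz : y ≤ z) :
    marginalCdf μ J y ≤ marginalCdf μ J z :=
  measureReal_mono fun _ hv i hi => (hv i hi).trans (hyz i)

theorem marginalCdf_congr (J : Finset ι) {y z : ι → ℝ} (h : ∀ i ∈ J, y i = z i) :
    marginalCdf μ J y = marginalCdf μ J z := by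
  unfold marginalCdf
  congr! 3 with v
  exact forall₂_congr fun i hi => by rw [h i hi]

variable [Fintype ι]

theorem marginalCdf_univ_le [IsFiniteMeasure μ] (J : Finset ι) (y : ι → ℝ) :
    marginalCdf μ Finset.univ y ≤ marginalCdf μ J y :=
  measureReal_mono fun _ hv i _ => hv i (Finset.mem_univ i)

variable [DecidableEq ι]

theorem tendsto_marginalCdf_piecewise_atTop [IsFiniteMeasure μ] (J : Finset ι) (y : ι → ℝ) :
    Tendsto (fun t : ℝ => marginalCdf μ Finset.univ (J.piecewise y fun _ => t)) atTop
      (𝓝 (marginalCdf μ J y)) := by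
  set s : ℝ → Set (ι → ℝ) := fun t => {v | ∀ i ∈ Finset.univ, v i ≤ J.piecewise y (fun _ => t) i}
  have hs : Monotone s := by
    intro t t' htt' v hv i _
    refine (hv i (Finset.mem_univ i)).trans ?_
    by_cases hi : i ∈ J <;> simp [hi, htt']
  have hunion : (⋃ t, s t) = {v | ∀ i ∈ J, v i ≤ y i} := by
    ext v
    simp only [s, Set.mem_iUnion, Set.mem_ofPred_eq, Finset.mem_univ, true_implies]
    constructor
    · rintro ⟨t, ht⟩ i hi
      simpa [hi] using ht i
    · intro hv
      obtain ⟨t, ht⟩ := (Set.finite_range v).bddAbove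
      refine ⟨t, fun i => ?_⟩
      by_cases hi : i ∈ J
      · simpa [hi] using hv i hi
      · simpa [hi] using ht ⟨i, rfl⟩
  have := (ENNReal.tendsto_toReal (measure_ne_top μ _)).comp
    (tendsto_measure_iUnion_atTop (μ := μ) hs)
  rwa [hunion] at this

theorem IsMTP2.mul_marginalCdf_le [IsFiniteMeasure μ] (hF : IsMTP2 (marginalCdf μ Finset.univ))
    (J : Finset ι) {y z : ι → ℝ} (hzy : z ≤ y) :
    marginalCdf μ Finset.univ y * marginalCdf μ J z ≤
      marginalCdf μ J y * marginalCdf μ Finset.univ (J.piecewise z y) := by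
  obtain ⟨t₀, ht₀⟩ := (Set.finite_range y).bddAbove
  refine le_of_tendsto_of_tendsto ((tendsto_marginalCdf_piecewise_atTop J z).const_mul _)
    ((tendsto_marginalCdf_piecewise_atTop J y).mul_const _) ?_
  filter_upwards [eventually_ge_atTop t₀] with t ht
  have hyt : ∀ i, y i ≤ t := fun i => (ht₀ ⟨i, rfl⟩).trans ht
  have hsup : y ⊔ J.piecewise z (fun _ => t) = J.piecewise y fun _ => t := by
    ext i
    by_cases hi : i ∈ J <;> simp [hi, hzy i, hyt i]
  have hinf : y ⊓ J.piecewise z (fun _ => t) = J.piecewise z y := by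
    ext i
    by_cases hi : i ∈ J <;> simp [hi, hzy i, hyt i]
  simpa only [hsup, hinf] using hF y (J.piecewise z fun _ => t)

theorem IsMTP2.mul_marginalCdf_mul_marginalCdf_compl_le [IsFiniteMeasure μ]
    (hF : IsMTP2 (marginalCdf μ Finset.univ)) (I : Finset ι) {x b : ι → ℝ} (hxb : x ≤ b) :
    marginalCdf μ Finset.univ b * (marginalCdf μ I x * marginalCdf μ Iᶜ x) ≤
      marginalCdf μ Finset.univ x * (marginalCdf μ I b * marginalCdf μ Iᶜ b) := by
  set h := Iᶜ.piecewise x b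
  have hxh : x ≤ h := fun i => by by_cases hi : i ∈ I <;> simp [h, hi, hxb i]
  have hIc : marginalCdf μ Finset.univ b * marginalCdf μ Iᶜ x ≤
      marginalCdf μ Iᶜ b * marginalCdf μ Finset.univ h :=
    hF.mul_marginalCdf_le Iᶜ hxb
  have hI : marginalCdf μ Finset.univ h * marginalCdf μ I x ≤
      marginalCdf μ I b * marginalCdf μ Finset.univ x := by
    have hhb : marginalCdf μ I h = marginalCdf μ I b :=
      marginalCdf_congr I fun i hi => by simp [h, hi]
    have hpw : I.piecewise x h = x := by
      ext i
      by_cases hi : i ∈ I <;> simp [h, hi]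
    simpa only [hhb, hpw] using hF.mul_marginalCdf_le I hxh
  have h0 : ∀ J y, 0 ≤ marginalCdf μ J y := fun _ _ => measureReal_nonneg
  calc marginalCdf μ Finset.univ b * (marginalCdf μ I x * marginalCdf μ Iᶜ x)
      = marginalCdf μ Finset.univ b * marginalCdf μ Iᶜ x * marginalCdf μ I x := by ring
    _ ≤ marginalCdf μ Iᶜ b * marginalCdf μ Finset.univ h * marginalCdf μ I x := by
      gcongr; exact h0 _ _
    _ = marginalCdf μ Iᶜ b * (marginalCdf μ Finset.univ h * marginalCdf μ I x) := by ring
    _ ≤ marginalCdf μ Iᶜ b * (marginalCdf μ I b * marginalCdf μ Finset.univ x) := by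
      gcongr; exact h0 _ _
    _ = _ := by ring

theorem marginalCdf_univ_pos_of_density [IsProbabilityMeasure μ] {f : (ι → ℝ) → ℝ}
    (hf : ∀ v : ι → ℝ, (∀ i, 0 < v i) → 0 < f v)
    (hdens : ∀ y : ι → ℝ, marginalCdf μ Finset.univ y =
      ∫ v in {v : ι → ℝ | ∀ i, v i ≤ y i} ∩ {v | ∀ i, 0 < v i}, f v)
    {y : ι → ℝ} (hy : ∀ i, 0 < y i) : 0 < marginalCdf μ Finset.univ y := by
  obtain ⟨t₀, ht₀⟩ := (Set.finite_range y).bddAbove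
  have hlim := tendsto_marginalCdf_piecewise_atTop (μ := μ) ∅ y
  simp only [Finset.piecewise_empty] at hlim
  have hpos : 0 < marginalCdf μ ∅ y := by simp [marginalCdf]
  obtain ⟨t, hyt, ht⟩ :=
    ((eventually_ge_atTop t₀).and (hlim.eventually (eventually_gt_nhds hpos))).exists
  -- `f` is integrable on the box below `(t, …, t)`: a non-integrable `f` would have integral `0`.
  have hint : IntegrableOn f ({v : ι → ℝ | ∀ i, v i ≤ t} ∩ {v | ∀ i, 0 < v i}) :=
    Integrable.of_integral_ne_zero ((hdens _).symm.trans_ne ht.ne')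
  have hbox : {v : ι → ℝ | ∀ i, v i ≤ y i} ∩ {v | ∀ i, 0 < v i} =
      Set.univ.pi fun i => Set.Ioc 0 (y i) := by
    ext v
    simp [forall_and, and_comm]
  rw [hdens]
  refine setIntegral_pos_of_forall_pos ?_ ?_ (fun v hv => hf v hv.2) ?_
  · rw [hbox]; exact MeasurableSet.univ_pi fun i => measurableSet_Ioc
  · simp [hbox, volume_pi_pi, Finset.prod_ne_zero_iff, hy]
  · exact hint.mono_set fun v hv => ⟨fun i => (hv.1 i).trans ((ht₀ ⟨i, rfl⟩).trans hyt), hv.2⟩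

end

theorem stmt_4_general {n : ℕ} (μ : Measure (Fin n → ℝ)) [IsProbabilityMeasure μ]
    (f : (Fin n → ℝ) → ℝ)
    (P : Finset (Fin n) → (Fin n → ℝ) → ℝ)
    (hP : ∀ (I : Finset (Fin n)) (x : Fin n → ℝ),
      P I x = (μ {v | ∀ i ∈ I, v i ≤ x i}).toReal)
    (hfpos : ∀ x : Fin n → ℝ, (∀ i, 0 < x i) → 0 < f x)
    (hdens : ∀ x : Fin n → ℝ, P Finset.univ x = ∫ v in {v : Fin n → ℝ | ∀ i, v i ≤ x i} ∩ {v | ∀ i, 0 < v i}, f v)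
    (hMTP2 : ∀ x y : Fin n → ℝ,
      P Finset.univ x * P Finset.univ y ≤ P Finset.univ (x ⊔ y) * P Finset.univ (x ⊓ y))
    (I : Finset (Fin n))
    (x b : Fin n → ℝ) (hx : ∀ i, 0 < x i) (hxb : ∀ i, x i ≤ b i) :
    P Finset.univ b / (P I b * P Iᶜ b) ≤ P Finset.univ x / (P I x * P Iᶜ x) := by
  obtain rfl : P = marginalCdf μ := funext₂ hP
  have hFx : 0 < marginalCdf μ Finset.univ x := marginalCdf_univ_pos_of_density hfpos hdens hx
  have hpos : ∀ J y, x ≤ y → 0 < marginalCdf μ J y := fun J y hxy =>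
    hFx.trans_le ((marginalCdf_univ_le J x).trans (marginalCdf_mono J hxy))
  rw [div_le_div_iff₀ (mul_pos (hpos I b hxb) (hpos Iᶜ b hxb))
    (mul_pos (hpos I x le_rfl) (hpos Iᶜ x le_rfl))]
  exact IsMTP2.mul_marginalCdf_mul_marginalCdf_compl_le hMTP2 I hxb

/-- If the cdf of a positive random vector is C², has everywhere positive density on
`ℝ₊ⁿ` and is MTP₂, then the Gaussian-correlation-type ratio improves under
right-truncation: the ratio `P(∩Aᵢ)/(P(∩_{i∈I}Aᵢ)P(∩_{i∉I}Aᵢ))` is at least the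
corresponding ratio for larger thresholds `b`. -/
theorem stmt_4 {n : ℕ} (μ : Measure (Fin n → ℝ)) [IsProbabilityMeasure μ]
    (f : (Fin n → ℝ) → ℝ)
    (P : Finset (Fin n) → (Fin n → ℝ) → ℝ)
    (hP : ∀ (I : Finset (Fin n)) (x : Fin n → ℝ),
      P I x = (μ {v | ∀ i ∈ I, v i ≤ x i}).toReal)
    (hfpos : ∀ x : Fin n → ℝ, (∀ i, 0 < x i) → 0 < f x)
    (hdens : ∀ x : Fin n → ℝ, P Finset.univ x = ∫ v in {v : Fin n → ℝ | ∀ i, v i ≤ x i} ∩ {v | ∀ i, 0 < v i}, f v)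
    (hC2 : ContDiffOn ℝ 2 (P Finset.univ) {x : Fin n → ℝ | ∀ i, 0 < x i})
    (hMTP2 : ∀ x y : Fin n → ℝ,
      P Finset.univ x * P Finset.univ y ≤ P Finset.univ (x ⊔ y) * P Finset.univ (x ⊓ y))
    (I : Finset (Fin n)) (hIne : I.Nonempty) (hIprop : I ≠ Finset.univ)
    (x b : Fin n → ℝ) (hx : ∀ i, 0 < x i) (hxb : ∀ i, x i ≤ b i) :
    P Finset.univ b / (P I b * P Iᶜ b) ≤ P Finset.univ x / (P I x * P Iᶜ x) :=
  stmt_4_general μ f P hP hfpos hdens hMTP2 I x b hx hxb
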